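/- Let α be strictly increasing with α_n > 1 and α_n → ∞. The Cesàro operator C on Λ₀(α) is not supercyclic: there is no z ∈ Λ₀(α) such that the projective orbit {λ·C^n z : λ ∈ ℂ, n ≥ 0} is dense in Λ₀(α). In particular, C is not hypercyclic, i.e. there is no x ∈ Λ₀(α) whose orbit {C^n x : n ≥ 0} is dense in Λ₀(α). -/

import Mathlib

open Filter Finset Topology

noncomputable section

/-- The weight `w_k(n) = e^{-alpha_n / k}`.  Indices are shifted by one: the natural
numbers `k n : Nat` represent the indices `k+1` and `n+1` (both running from `1`). -/
def wt (a : ℕ → ℝ) (k n : ℕ) : ℝ := Real.exp (-(a n) / ((k : ℝ) + 1))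

/-- Membership in the power series space of finite type `Λ₀(α)`:
`x ∈ Λ₀(α)` iff `w_k(n)|x_n| → 0` for every `k ≥ 1`. -/
def memLambda (a : ℕ → ℝ) (x : ℕ → ℂ) : Prop :=
  ∀ k : ℕ, Tendsto (fun n => wt a k n * ‖x n‖) atTop (𝓝 0)

/-- The norm `p_k(x) = sup_n w_k(n)|x_n|` generating the Fréchet topology of `Λ₀(α)`. -/
def pk (a : ℕ → ℝ) (k : ℕ) (x : ℕ → ℂ) : ℝ := ⨆ n : ℕ, wt a k n * ‖x n‖

/-- The discrete Cesàro operator `(C x)_n = (x_1 + ⋯ + x_n)/n` (0-indexed). -/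
def cesaro (x : ℕ → ℂ) : ℕ → ℂ := fun n => (∑ i ∈ Finset.range (n + 1), x i) / ((n : ℂ) + 1)

lemma wt_pos (a : ℕ → ℝ) (k n : ℕ) : 0 < wt a k n := Real.exp_pos _

lemma wt_le_one (a : ℕ → ℝ) (h1 : ∀ n, 1 < a n) (k n : ℕ) : wt a k n ≤ 1 := by
  rw [wt, Real.exp_le_one_iff]
  have := h1 n
  have hk : (0:ℝ) < (k:ℝ) + 1 := by positivity
  apply div_nonpos_of_nonpos_of_nonneg <;> linarith

lemma wt_anti (a : ℕ → ℝ) (hmono : StrictMono a) (k : ℕ) {i n : ℕ} (h : i ≤ n) :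
    wt a k n ≤ wt a k i := by
  apply Real.exp_le_exp.2
  have hai : a i ≤ a n := hmono.monotone h
  have hk : (0:ℝ) < (k:ℝ) + 1 := by positivity
  gcongr

lemma cesaro_apply_zero (x : ℕ → ℂ) : cesaro x 0 = x 0 := by
  simp [cesaro]

lemma cesaro_apply_one (x : ℕ → ℂ) : cesaro x 1 = (x 0 + x 1) / 2 := by
  simp [cesaro, Finset.sum_range_succ]
  norm_num

lemma iter_zero (z : ℕ → ℂ) (m : ℕ) : cesaro^[m] z 0 = z 0 := by
  induction m with
  | zero => rfl
  | succ m ih => rw [Function.iterate_succ_apply', cesaro_apply_zero, ih]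

lemma iter_one (z : ℕ → ℂ) (m : ℕ) :
    cesaro^[m] z 1 = z 0 + (z 1 - z 0) / 2 ^ m := by
  induction m with
  | zero => simp
  | succ m ih =>
    rw [Function.iterate_succ_apply', cesaro_apply_one, iter_zero, ih]
    have h2 : ((2:ℂ) ^ m) ≠ 0 := pow_ne_zero _ two_ne_zero
    field_simp
    ring

lemma cesaro_bound (a : ℕ → ℝ) (hmono : StrictMono a) (k : ℕ) (y : ℕ → ℂ) (M : ℝ)
    (hy : ∀ n, wt a k n * ‖y n‖ ≤ M) (n : ℕ) :
    wt a k n * ‖cesaro y n‖ ≤ M := by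
  have hn1 : (0:ℝ) < (n:ℝ) + 1 := by positivity
  have habs : ‖cesaro y n‖
      ≤ (∑ i ∈ range (n + 1), ‖y i‖) / ((n:ℝ) + 1) := by
    rw [cesaro, norm_div]
    have h1 : ‖(n:ℂ) + 1‖ = (n:ℝ) + 1 := by
      rw [show ((n:ℂ) + 1) = ((n + 1 : ℕ) : ℂ) by push_cast; ring, Complex.norm_natCast]
      push_cast; ring
    rw [h1]
    gcongr
    exact norm_sum_le _ _
  calc wt a k n * ‖cesaro y n‖
      ≤ wt a k n * ((∑ i ∈ range (n + 1), ‖y i‖) / ((n:ℝ) + 1)) := by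
        gcongr
        exact (wt_pos a k n).le
    _ = (∑ i ∈ range (n + 1), wt a k n * ‖y i‖) / ((n:ℝ) + 1) := by
        rw [← mul_div_assoc, Finset.mul_sum]
    _ ≤ (∑ _i ∈ range (n + 1), M) / ((n:ℝ) + 1) := by
        gcongr with i hi
        calc wt a k n * ‖y i‖
            ≤ wt a k i * ‖y i‖ :=
              mul_le_mul_of_nonneg_right
                (wt_anti a hmono k (Nat.lt_succ_iff.mp (Finset.mem_range.mp hi)))
                (norm_nonneg _)
          _ ≤ M := hy i
    _ = M := by rw [Finset.sum_const, Finset.card_range, nsmul_eq_mul]; push_cast; field_simp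
  
lemma iter_bound (a : ℕ → ℝ) (hmono : StrictMono a) (k : ℕ) (z : ℕ → ℂ) (M : ℝ)
    (hz : ∀ n, wt a k n * ‖z n‖ ≤ M) (m : ℕ) :
    ∀ n, wt a k n * ‖cesaro^[m] z n‖ ≤ M := by
  induction m with
  | zero => exact hz
  | succ m ih =>
    intro n
    rw [Function.iterate_succ_apply']
    exact cesaro_bound a hmono k _ M ih n

lemma bdd_sub (a : ℕ → ℝ) (h1 : ∀ n, 1 < a n) (k : ℕ) (x f : ℕ → ℂ) (c : ℂ) (M : ℝ)
    (hx : ∀ n, ‖x n‖ ≤ 1)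
    (hf : ∀ n, wt a k n * ‖f n‖ ≤ M) :
    BddAbove (Set.range fun n => wt a k n * ‖(x - c • f) n‖) := by
  refine ⟨1 + ‖c‖ * M, ?_⟩
  rintro _ ⟨n, rfl⟩
  have habs : ‖(x - c • f) n‖
      ≤ ‖x n‖ + ‖c‖ * ‖f n‖ := by
    have h : (x - c • f) n = x n - c * f n := rfl
    rw [h]
    simpa [norm_mul] using norm_sub_le (x n) (c * f n)
  calc wt a k n * ‖(x - c • f) n‖
      ≤ wt a k n * (‖x n‖ + ‖c‖ * ‖f n‖) := by
        gcongr
        exact (wt_pos a k n).le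
    _ = wt a k n * ‖x n‖ + ‖c‖ * (wt a k n * ‖f n‖) := by ring
    _ ≤ 1 + ‖c‖ * M := by
        apply add_le_add
        · calc wt a k n * ‖x n‖
              ≤ 1 * 1 := mul_le_mul (wt_le_one a h1 k n) (hx n) (norm_nonneg _) zero_le_one
            _ = 1 := by ring
        · exact mul_le_mul_of_nonneg_left (hf n) (norm_nonneg c)

lemma memLambda_single (a : ℕ → ℝ) (j : ℕ) (v : ℂ) :
    memLambda a (fun n => if n = j then v else 0) := by
  intro k
  apply tendsto_const_nhds.congr'
  filter_upwards [eventually_gt_atTop j] with n hn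
  simp [Nat.ne_of_gt hn]

lemma key (a : ℕ → ℝ) (hmono : StrictMono a) (h1 : ∀ n, 1 < a n) :
    ¬ ∃ z : ℕ → ℂ, memLambda a z ∧
      ∀ x : ℕ → ℂ, memLambda a x → ∀ k : ℕ, ∀ ε : ℝ, 0 < ε →
        ∃ (c : ℂ) (n : ℕ), pk a k (x - c • cesaro^[n] z) < ε := by
  rintro ⟨z, hz, hdense⟩
  -- uniform bound on the orbit at level k = 0
  obtain ⟨M, hM⟩ := (hz 0).bddAbove_range
  have hMz : ∀ n, wt a 0 n * ‖z n‖ ≤ M := fun n => hM ⟨n, rfl⟩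
  have hiter : ∀ m n, wt a 0 n * ‖cesaro^[m] z n‖ ≤ M :=
    fun m => iter_bound a hmono 0 z M hMz m
  set w0 := wt a 0 0 with hw0def
  set w1 := wt a 0 1 with hw1def
  have hw0 : 0 < w0 := wt_pos a 0 0
  have hw1 : 0 < w1 := wt_pos a 0 1
  by_cases hz0 : z 0 = 0
  · -- take x = e₀
    set x : ℕ → ℂ := fun n => if n = 0 then 1 else 0 with hxdef
    have hx1 : ∀ n, ‖x n‖ ≤ 1 := by
      intro n; simp only [hxdef]; split <;> simp
    obtain ⟨c, n, hpk⟩ := hdense x (memLambda_single a 0 1) 0 w0 hw0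
    have hbdd := bdd_sub a h1 0 x (cesaro^[n] z) c M hx1 (hiter n)
    have hle : wt a 0 0 * ‖(x - c • cesaro^[n] z) 0‖ ≤ pk a 0 (x - c • cesaro^[n] z) :=
      le_ciSup hbdd 0
    have hcoord : (x - c • cesaro^[n] z) 0 = 1 := by
      show x 0 - c * cesaro^[n] z 0 = 1
      rw [iter_zero, hz0]; simp [hxdef]
    rw [hcoord] at hle
    simp only [norm_one, mul_one] at hle
    exact absurd (lt_of_le_of_lt hle hpk) (lt_irrefl _)
  · -- take x = e₁
    set x : ℕ → ℂ := fun n => if n = 1 then 1 else 0 with hxdef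
    have hx1 : ∀ n, ‖x n‖ ≤ 1 := by
      intro n; simp only [hxdef]; split <;> simp
    set A : ℝ := w0 * ‖z 0‖ with hAdef
    have hA : 0 < A := mul_pos hw0 (norm_pos_iff.2 hz0)
    set B : ℝ := ‖z 0‖ + ‖z 1 - z 0‖ with hBdef
    have hB : 0 ≤ B := by positivity
    set D : ℝ := 1 / w1 + (B + 1) / A with hDdef
    have hD : 0 < D := by positivity
    set ε : ℝ := 1 / D with hεdef
    have hε : 0 < ε := by positivity
    obtain ⟨c, n, hpk⟩ := hdense x (memLambda_single a 1 1) 0 ε hε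
    have hbdd := bdd_sub a h1 0 x (cesaro^[n] z) c M hx1 (hiter n)
    -- coordinate 0
    have hle0 : wt a 0 0 * ‖(x - c • cesaro^[n] z) 0‖ < ε :=
      lt_of_le_of_lt (le_ciSup hbdd 0) hpk
    have hcoord0 : (x - c • cesaro^[n] z) 0 = -(c * z 0) := by
      show x 0 - c * cesaro^[n] z 0 = -(c * z 0)
      rw [iter_zero]; simp [hxdef]
    rw [hcoord0, norm_neg, norm_mul] at hle0
    -- hle0 : w0 * (|c| * |z 0|) < ε, i.e. |c| * A < ε
    have hcA : ‖c‖ * A < ε := by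
      rw [hAdef]; calc ‖c‖ * (w0 * ‖z 0‖)
          = w0 * (‖c‖ * ‖z 0‖) := by ring
        _ < ε := hle0
    have hc : ‖c‖ < ε / A := (lt_div_iff₀ hA).2 hcA
    -- coordinate 1
    have hle1 : wt a 0 1 * ‖(x - c • cesaro^[n] z) 1‖ < ε :=
      lt_of_le_of_lt (le_ciSup hbdd 1) hpk
    set y1 : ℂ := cesaro^[n] z 1 with hy1def
    have hcoord1 : (x - c • cesaro^[n] z) 1 = 1 - c * y1 := by
      show x 1 - c * cesaro^[n] z 1 = 1 - c * y1
      simp [hxdef, hy1def]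
    rw [hcoord1] at hle1
    -- bound on |y1|
    have hy1B : ‖y1‖ ≤ B := by
      rw [hy1def, iter_one, hBdef]
      calc ‖z 0 + (z 1 - z 0) / 2 ^ n‖
          ≤ ‖z 0‖ + ‖(z 1 - z 0) / 2 ^ n‖ := norm_add_le _ _
        _ ≤ ‖z 0‖ + ‖z 1 - z 0‖ := by
            gcongr
            rw [norm_div]
            have h2n : (1:ℝ) ≤ ‖(2:ℂ) ^ n‖ := by
              rw [norm_pow]
              simp only [Complex.norm_two]
              exact one_le_pow₀ (by norm_num)
            calc ‖z 1 - z 0‖ / ‖(2:ℂ) ^ n‖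
                ≤ ‖z 1 - z 0‖ / 1 := by
                  gcongr
              _ = ‖z 1 - z 0‖ := div_one _
    -- combine
    have hone : (1:ℝ) ≤ ‖1 - c * y1‖ + ‖c‖ * ‖y1‖ := by
      have := norm_add_le (1 - c * y1) (c * y1)
      simp only [sub_add_cancel, norm_one, norm_mul] at this
      exact this
    have h1lt : ‖1 - c * y1‖ < ε / w1 := by
      rw [lt_div_iff₀ hw1, mul_comm]; exact hle1
    have hcy : ‖c‖ * ‖y1‖ ≤ (ε / A) * B :=
      mul_le_mul hc.le hy1B (norm_nonneg _) (by positivity)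
    have hfinal : (1:ℝ) < ε / w1 + (ε / A) * B := by
      calc (1:ℝ) ≤ ‖1 - c * y1‖ + ‖c‖ * ‖y1‖ := hone
        _ < ε / w1 + (ε / A) * B := by
            apply add_lt_add_of_lt_of_le h1lt hcy
    have heq : ε / w1 + (ε / A) * B = ε * (1 / w1 + B / A) := by ring
    have hlt2 : ε * (1 / w1 + B / A) < ε * D := by
      apply mul_lt_mul_of_pos_left _ hε
      rw [hDdef]
      gcongr
      linarith
    have hεD : ε * D = 1 := by
      rw [hεdef]; field_simp
    rw [heq] at hfinal
    rw [hεD] at hlt2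
    linarith

/-- the Cesàro operator on `Λ₀(α)` is not supercyclic (no projective
orbit `{λ C^n z}` is dense) and in particular not hypercyclic (no orbit `{C^n x}` is
dense).  Density is expressed via the norms `p_k` generating the topology. -/
theorem stmt19 (a : ℕ → ℝ) (hmono : StrictMono a) (h1 : ∀ n, 1 < a n)
    (htop : Tendsto a atTop atTop) :
    (¬ ∃ z : ℕ → ℂ, memLambda a z ∧
      ∀ x : ℕ → ℂ, memLambda a x → ∀ k : ℕ, ∀ ε : ℝ, 0 < ε →
        ∃ (c : ℂ) (n : ℕ), pk a k (x - c • cesaro^[n] z) < ε) ∧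
    (¬ ∃ z : ℕ → ℂ, memLambda a z ∧
      ∀ x : ℕ → ℂ, memLambda a x → ∀ k : ℕ, ∀ ε : ℝ, 0 < ε →
        ∃ n : ℕ, pk a k (x - cesaro^[n] z) < ε) := by
  refine ⟨key a hmono h1, ?_⟩
  rintro ⟨z, hz, hdense⟩
  apply key a hmono h1
  refine ⟨z, hz, fun x hx k ε hε => ?_⟩
  obtain ⟨n, hn⟩ := hdense x hx k ε hε
  exact ⟨1, n, by simpa using hn⟩
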